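/- arXiv:2009.08532 — 3 statements merged into one kernel-verified Lean document; each statement's English description precedes it below -/
import Mathlib

section
/- The radio number of K₂ □ K₃ □ K₃ equals 20. -/
/-- Hamming distance on triples: the number of coordinates in which they differ. -/
def hdist {a b c : ℕ} (x y : Fin a × Fin b × Fin c) : ℕ :=
  (if x.1 = y.1 then 0 else 1) + (if x.2.1 = y.2.1 then 0 else 1) +
    (if x.2.2 = y.2.2 then 0 else 1)

/-- A radio labeling of a diameter-3 Hamming graph on triples. -/
def IsRadioLabeling {a b c : ℕ} (f : Fin a × Fin b × Fin c → ℕ) : Prop :=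
  (∀ v, 1 ≤ f v) ∧ ∀ u v, u ≠ v → (4 : ℤ) - hdist u v ≤ |(f u : ℤ) - (f v : ℤ)|

/-- The radio number: minimal span over all radio labelings. -/
noncomputable def radioNumber (a b c : ℕ) : ℕ :=
  sInf {s : ℕ | ∃ f : Fin a × Fin b × Fin c → ℕ, IsRadioLabeling f ∧ ∀ v, f v ≤ s}

/-! ### Auxiliary material -/

abbrev V233 := Fin 2 × Fin 3 × Fin 3

/-- An explicit optimal radio labeling of `K₂ □ K₃ □ K₃`. -/
def f233 : V233 → ℕ :=
  fun x => 7 * ((3 + x.2.2.val - x.2.1.val) % 3) + (3 * x.1.val + 4 * x.2.1.val) % 6 + 1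

set_option maxHeartbeats 2000000 in
lemma f233_lab : IsRadioLabeling f233 ∧ ∀ v, f233 v ≤ 20 := by
  refine ⟨⟨?_, ?_⟩, ?_⟩ <;> decide

private lemma fin2_trans : ∀ a b c : Fin 2, a ≠ b → b ≠ c → a = c := by decide

private lemma fin3_pick' : ∀ p q r s : Fin 3, (p ≠ q ∧ q ≠ r ∧ p ≠ r ∧ s ≠ q ∧ s ≠ r) → s = p := by
  decide

private lemma fin3_pick (p q r s : Fin 3) (h1 : p ≠ q) (h2 : q ≠ r) (h3 : p ≠ r) (h4 : s ≠ q)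
    (h5 : s ≠ r) : s = p := fin3_pick' p q r s ⟨h1, h2, h3, h4, h5⟩

private lemma hdist3 {x y : V233} (h : 3 ≤ hdist x y) :
    x.1 ≠ y.1 ∧ x.2.1 ≠ y.2.1 ∧ x.2.2 ≠ y.2.2 := by
  unfold hdist at h
  refine ⟨?_, ?_, ?_⟩ <;> intro he <;> simp [he] at h <;> split_ifs at h <;> omega

private lemma hdist2 {x y : V233} (h : 2 ≤ hdist x y) (h1 : x.1 = y.1) :
    x.2.1 ≠ y.2.1 ∧ x.2.2 ≠ y.2.2 := by
  unfold hdist at h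
  refine ⟨?_, ?_⟩ <;> intro he <;> simp [he, h1] at h <;> split_ifs at h <;> omega

/-- The key rigidity lemma: four consecutive vertices of a tight radio labeling force
the fourth to be the "antipodal twin" of the first. -/
lemma key233 (x y z w : V233) (hxy : 3 ≤ hdist x y) (hyz : 3 ≤ hdist y z)
    (hzw : 3 ≤ hdist z w) (hxz : 2 ≤ hdist x z) (hyw : 2 ≤ hdist y w) :
    w.2 = x.2 ∧ w.1 ≠ x.1 := by
  obtain ⟨a1, a2, a3⟩ := hdist3 hxy
  obtain ⟨b1, b2, b3⟩ := hdist3 hyz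
  obtain ⟨c1, c2, c3⟩ := hdist3 hzw
  have hx1z : x.1 = z.1 := fin2_trans _ _ _ a1 b1
  have hy1w : y.1 = w.1 := fin2_trans _ _ _ b1 c1
  obtain ⟨d2, d3⟩ := hdist2 hxz hx1z
  obtain ⟨e2, e3⟩ := hdist2 hyw hy1w
  have hb : w.2.1 = x.2.1 := fin3_pick _ _ _ _ a2 b2 d2 (fun h => e2 h.symm) (fun h => c2 h.symm)
  have hc : w.2.2 = x.2.2 := fin3_pick _ _ _ _ a3 b3 d3 (fun h => e3 h.symm) (fun h => c3 h.symm)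
  exact ⟨Prod.ext hb hc, fun h => c1 (h.trans hx1z).symm⟩

lemma hdist_le3 (x y : V233) : hdist x y ≤ 3 := by
  unfold hdist; split_ifs <;> omega

lemma exists_sorted (f : V233 → ℕ) (hinj : Function.Injective f) :
    ∃ Y : ℕ → V233, (∀ i j, i < j → j ≤ 17 → f (Y i) < f (Y j)) := by
  classical
  set s : Finset ℕ := Finset.univ.image f with hs
  have hcard : s.card = 18 := by
    rw [hs, Finset.card_image_of_injective _ hinj, Finset.card_univ]
    simp
  set σ := s.orderIsoOfFin hcard with hσ
  have hmem : ∀ i : Fin 18, ∃ v : V233, f v = (σ i : ℕ) := by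
    intro i
    have h2 : (σ i : ℕ) ∈ Finset.univ.image f := (σ i).2
    obtain ⟨v, -, hv⟩ := Finset.mem_image.mp h2
    exact ⟨v, hv⟩
  choose y hy using hmem
  refine ⟨fun n => y ⟨min n 17, by omega⟩, ?_⟩
  intro i j hij hj
  rw [hy, hy]
  have : (⟨min i 17, by omega⟩ : Fin 18) < ⟨min j 17, by omega⟩ := by
    simp [Fin.lt_def]; omega
  exact_mod_cast σ.strictMono this

/-- Lower bound: every radio labeling of `K₂ □ K₃ □ K₃` has a label at least `20`. -/
lemma lb233 (s : ℕ) (hs : ∃ f : V233 → ℕ, IsRadioLabeling f ∧ ∀ v, f v ≤ s) : 20 ≤ s := by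
  obtain ⟨f, ⟨hpos, hrad⟩, hub⟩ := hs
  by_contra hcon
  push_neg at hcon
  have hs19 : s ≤ 19 := by omega
  -- f is injective
  have hinj : Function.Injective f := by
    intro u v huv
    by_contra hne
    have h1 := hrad u v hne
    have h2 := hdist_le3 u v
    rw [huv] at h1
    simp at h1
    have : ((hdist u v : ℤ)) ≤ 3 := by exact_mod_cast h2
    omega
  obtain ⟨Y, hY⟩ := exists_sorted f hinj
  set F : ℕ → ℕ := fun n => f (Y n) with hF
  have h1 : ∀ i, i < 17 → F i < F (i + 1) := fun i hi => hY i (i + 1) (by omega) (by omega)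
  -- superadditivity
  have h2 : ∀ j, j ≤ 17 → ∀ i, i ≤ j → F i + (j - i) ≤ F j := by
    intro j hj
    induction j with
    | zero => intro i hi; obtain rfl := Nat.le_zero.mp hi; omega
    | succ n ih =>
      intro i hi
      rcases Nat.eq_or_lt_of_le hi with rfl | h
      · omega
      · have hA := ih (by omega) i (by omega)
        have hB := h1 n (by omega)
        omega
  have hF0 : 1 ≤ F 0 := hpos _
  have hF17 : F 17 ≤ 19 := le_trans (hub _) hs19
  -- at most one "bad" gap
  have hone : ∀ i j, i < j → j ≤ 16 → F i + 2 ≤ F (i + 1) → F j + 2 ≤ F (j + 1) → False := by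
    intro i j hij hj hbi hbj
    have hA := h2 i (by omega) 0 (by omega)
    have hB := h2 j (by omega) (i + 1) (by omega)
    have hC := h2 17 (by omega) (j + 1) (by omega)
    omega
  -- a window of 6 consecutive unit gaps
  have hwin : ∃ i0, i0 + 6 ≤ 17 ∧ ∀ j, i0 ≤ j → j < i0 + 6 → F (j + 1) = F j + 1 := by
    by_cases hb : ∃ k, k ≤ 16 ∧ F k + 2 ≤ F (k + 1)
    · obtain ⟨k, hk, hbk⟩ := hb
      by_cases hk5 : k ≤ 5
      · refine ⟨6, by omega, fun j hj hj6 => ?_⟩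
        have hA := h1 j (by omega)
        have hB : ¬(F j + 2 ≤ F (j + 1)) := fun hc => hone k j (by omega) (by omega) hbk hc
        omega
      · refine ⟨0, by omega, fun j hj hj6 => ?_⟩
        have hA := h1 j (by omega)
        have hB : ¬(F j + 2 ≤ F (j + 1)) := fun hc => hone j k (by omega) (by omega) hc hbk
        omega
    · push_neg at hb
      refine ⟨0, by omega, fun j hj hj6 => ?_⟩
      have hA := h1 j (by omega)
      have hB := hb j (by omega)
      omega
  obtain ⟨i0, hi06, hwin⟩ := hwin
  have hFm : ∀ m, m ≤ 6 → F (i0 + m) = F i0 + m := by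
    intro m hm
    induction m with
    | zero => simp
    | succ n ih =>
      show F (i0 + n + 1) = F i0 + (n + 1)
      have := hwin (i0 + n) (by omega) (by omega)
      have := ih (by omega)
      omega
  -- hamming distance constraints inside the window
  have hd : ∀ p q, p < q → q ≤ 6 → 4 ≤ hdist (Y (i0 + p)) (Y (i0 + q)) + (q - p) := by
    intro p q hpq hq6
    have hfp : f (Y (i0 + p)) = F i0 + p := hFm p (by omega)
    have hfq : f (Y (i0 + q)) = F i0 + q := hFm q (by omega)
    have hne : Y (i0 + p) ≠ Y (i0 + q) := by
      intro he
      have : f (Y (i0 + p)) = f (Y (i0 + q)) := congrArg f he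
      omega
    have hr := hrad _ _ hne
    rw [hfp, hfq] at hr
    have habs : |((F i0 + p : ℕ) : ℤ) - ((F i0 + q : ℕ) : ℤ)| = (q : ℤ) - p := by
      rw [abs_sub_comm, abs_of_nonneg (by push_cast; omega)]
      push_cast; ring
    rw [habs] at hr
    have hd3 := hdist_le3 (Y (i0 + p)) (Y (i0 + q))
    have : (4 : ℤ) ≤ (hdist (Y (i0 + p)) (Y (i0 + q)) : ℤ) + ((q : ℤ) - p) := by omega
    push_cast at this ⊢
    omega
  have k1 := key233 (Y i0) (Y (i0 + 1)) (Y (i0 + 2)) (Y (i0 + 3))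
    (by have := hd 0 1 (by omega) (by omega); simp only [Nat.add_zero] at this; omega)
    (by have := hd 1 2 (by omega) (by omega); omega)
    (by have := hd 2 3 (by omega) (by omega); omega)
    (by have := hd 0 2 (by omega) (by omega); simp only [Nat.add_zero] at this; omega)
    (by have := hd 1 3 (by omega) (by omega); omega)
  have k2 := key233 (Y (i0 + 3)) (Y (i0 + 4)) (Y (i0 + 5)) (Y (i0 + 6))
    (by have := hd 3 4 (by omega) (by omega); omega)
    (by have := hd 4 5 (by omega) (by omega); omega)
    (by have := hd 5 6 (by omega) (by omega); omega)
    (by have := hd 3 5 (by omega) (by omega); omega)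
    (by have := hd 4 6 (by omega) (by omega); omega)
  have heq : Y (i0 + 6) = Y i0 := by
    have h2eq : (Y (i0 + 6)).2 = (Y i0).2 := k2.1.trans k1.1
    have h1eq : (Y (i0 + 6)).1 = (Y i0).1 := fin2_trans _ _ _ k2.2 k1.2
    exact Prod.ext h1eq h2eq
  have := hFm 6 (by omega)
  have : f (Y (i0 + 6)) = f (Y i0) := congrArg f heq
  have h0 : F i0 = F i0 := rfl
  have hx : F (i0 + 6) = F i0 + 6 := hFm 6 (by omega)
  simp only [hF] at hx
  omega

theorem radioNumber_233 : radioNumber 2 3 3 = 20 := by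
  have hmem : 20 ∈ {s : ℕ | ∃ f : Fin 2 × Fin 3 × Fin 3 → ℕ, IsRadioLabeling f ∧ ∀ v, f v ≤ s} :=
    ⟨f233, f233_lab.1, f233_lab.2⟩
  refine le_antisymm (Nat.sInf_le hmem) (le_csInf ⟨20, hmem⟩ ?_)
  intro s hs
  exact lb233 s hs
end

section
/- For all n ≥ 2, the radio number of G_n = K₂ □ K₂ □ K_n satisfies rn(G_n) ≥ 6n − 1. -/
lemma hdist_le_three {a b c : ℕ} (x y : Fin a × Fin b × Fin c) : hdist x y ≤ 3 := by
  unfold hdist; split_ifs <;> omega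

lemma hdist_eq_zero {a b c : ℕ} {x y : Fin a × Fin b × Fin c} (h : hdist x y = 0) : x = y := by
  unfold hdist at h
  split_ifs at h with h1 h2 h3 <;> try omega
  exact Prod.ext h1 (Prod.ext h2 h3)

lemma hdist_eq_three {a b c : ℕ} {x y : Fin a × Fin b × Fin c} (h : hdist x y = 3) :
    x.1 ≠ y.1 ∧ x.2.1 ≠ y.2.1 ∧ x.2.2 ≠ y.2.2 := by
  unfold hdist at h
  split_ifs at h <;> simp_all

lemma fin2_trans_s14 {x y z : Fin 2} (h1 : x ≠ y) (h2 : y ≠ z) : x = z := by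
  revert h1 h2; revert x y z; decide

/-- No three vertices can receive three consecutive labels. -/
lemma no_three_consecutive {n : ℕ} {f : Fin 2 × Fin 2 × Fin n → ℕ}
    (hf : IsRadioLabeling f) {k : ℕ} {u v w : Fin 2 × Fin 2 × Fin n}
    (hu : f u = k) (hv : f v = k + 1) (hw : f w = k + 2) : False := by
  have huv : u ≠ v := by rintro rfl; omega
  have hvw : v ≠ w := by rintro rfl; omega
  have huw : u ≠ w := by rintro rfl; omega
  have duv : hdist u v = 3 := by
    have h := hf.2 u v huv
    have hb := hdist_le_three u v
    have habs : |(f u : ℤ) - (f v : ℤ)| = 1 := by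
      rcases abs_cases ((f u : ℤ) - (f v : ℤ)) with ⟨h1, _⟩ | ⟨h1, _⟩ <;> omega
    rw [habs] at h
    omega
  have dvw : hdist v w = 3 := by
    have h := hf.2 v w hvw
    have hb := hdist_le_three v w
    have habs : |(f v : ℤ) - (f w : ℤ)| = 1 := by
      rcases abs_cases ((f v : ℤ) - (f w : ℤ)) with ⟨h1, _⟩ | ⟨h1, _⟩ <;> omega
    rw [habs] at h
    omega
  have duw : 2 ≤ hdist u w := by
    have h := hf.2 u w huw
    have habs : |(f u : ℤ) - (f w : ℤ)| = 2 := by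
      rcases abs_cases ((f u : ℤ) - (f w : ℤ)) with ⟨h1, _⟩ | ⟨h1, _⟩ <;> omega
    rw [habs] at h
    omega
  obtain ⟨a1, a2, _⟩ := hdist_eq_three duv
  obtain ⟨b1, b2, _⟩ := hdist_eq_three dvw
  have e1 : u.1 = w.1 := fin2_trans_s14 a1 b1
  have e2 : u.2.1 = w.2.1 := fin2_trans_s14 a2 b2
  have : hdist u w ≤ 1 := by
    unfold hdist
    simp only [e1, e2, if_pos rfl]
    split_ifs <;> omega
  omega

theorem radioNumber_22n_ge (n : ℕ) (hn : 2 ≤ n) :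
    6 * n - 1 ≤ radioNumber 2 2 n := by
  unfold radioNumber
  apply le_csInf
  · -- the set of achievable spans is nonempty
    refine ⟨12 * n, fun v => 3 * (v.1.val + 2 * v.2.1.val + 4 * v.2.2.val) + 1, ⟨?_, ?_⟩, ?_⟩
    · intro v; dsimp only; omega
    · intro u v huv
      have henc : u.1.val + 2 * u.2.1.val + 4 * u.2.2.val ≠
          v.1.val + 2 * v.2.1.val + 4 * v.2.2.val := by
        intro h
        apply huv
        have h1 := u.1.isLt; have h2 := v.1.isLt
        have h3 := u.2.1.isLt; have h4 := v.2.1.isLt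
        refine Prod.ext (Fin.ext ?_) (Prod.ext (Fin.ext ?_) (Fin.ext ?_)) <;> omega
      have hd : 1 ≤ hdist u v := by
        rcases Nat.eq_zero_or_pos (hdist u v) with h | h
        · exact absurd (hdist_eq_zero h) huv
        · exact h
      have hd3 := hdist_le_three u v
      rcases abs_cases ((3 * (u.1.val + 2 * u.2.1.val + 4 * u.2.2.val) + 1 : ℤ) -
          (3 * (v.1.val + 2 * v.2.1.val + 4 * v.2.2.val) + 1)) with ⟨h1, _⟩ | ⟨h1, _⟩ <;>
        · push_cast at h1 ⊢
          omega
    · intro v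
      have h1 := v.1.isLt; have h3 := v.2.1.isLt; have h5 := v.2.2.isLt
      dsimp only
      omega
  · rintro s ⟨f, ⟨hpos, hf⟩, hle⟩
    by_contra hlt
    push_neg at hlt
    have hs : s ≤ 6 * n - 2 := by omega
    -- f is injective
    have hinj : Function.Injective f := by
      intro u v huv
      by_contra hne
      have h := hf u v hne
      have hd3 := hdist_le_three u v
      rw [huv] at h
      simp at h
      omega
    set T : Finset ℕ := Finset.image f Finset.univ with hT
    have hcardT : T.card = 4 * n := by
      rw [hT, Finset.card_image_of_injective _ hinj, Finset.card_univ]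
      simp [Fintype.card_prod]
      ring
    set T' : Finset ℕ := T.erase (6 * n - 2) with hT'
    have hcardT' : 4 * n - 1 ≤ T'.card := by
      have h1 : T ⊆ insert (6 * n - 2) T' := by
        intro x hx
        by_cases hx2 : x = 6 * n - 2
        · simp [hx2]
        · exact Finset.mem_insert_of_mem (Finset.mem_erase.2 ⟨hx2, hx⟩)
      have h2 := Finset.card_le_card h1
      have h3 := Finset.card_insert_le (6 * n - 2) T'
      omega
    have hmemT' : ∀ m ∈ T', 1 ≤ m ∧ m ≤ 6 * n - 3 := by
      intro m hm
      obtain ⟨hne, hmT⟩ := Finset.mem_erase.1 hm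
      obtain ⟨v, _, hv⟩ := Finset.mem_image.1 hmT
      have := hpos v
      have := hle v
      omega
    -- count via fibers of m ↦ (m-1)/3
    have hcount : T'.card ≤ 2 * (2 * n - 1) := by
      have key : T'.card ≤ 2 * (Finset.range (2 * n - 1)).card := by
        apply Finset.card_le_mul_card_image_of_maps_to (f := fun m => (m - 1) / 3)
          (t := Finset.range (2 * n - 1))
        · intro m hm
          obtain ⟨h1, h2⟩ := hmemT' m hm
          rw [Finset.mem_range]
          omega
        · intro b _
          by_contra hc
          push_neg at hc
          have hsub : {m ∈ T' | (m - 1) / 3 = b} ⊆ ({3 * b + 1, 3 * b + 2, 3 * b + 3} : Finset ℕ) := by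
            intro m hm
            obtain ⟨hm1, hm2⟩ := Finset.mem_filter.1 hm
            obtain ⟨h1, _⟩ := hmemT' m hm1
            simp only [Finset.mem_insert, Finset.mem_singleton]
            omega
          have hc3 : ({3 * b + 1, 3 * b + 2, 3 * b + 3} : Finset ℕ).card ≤
              {m ∈ T' | (m - 1) / 3 = b}.card := by
            have t1 := Finset.card_insert_le (3 * b + 1) ({3 * b + 2, 3 * b + 3} : Finset ℕ)
            have t2 := Finset.card_insert_le (3 * b + 2) ({3 * b + 3} : Finset ℕ)
            have t3 : ({3 * b + 3} : Finset ℕ).card = 1 := Finset.card_singleton _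
            omega
          have heq := Finset.eq_of_subset_of_card_le hsub hc3
          have hall : ∀ x ∈ ({3 * b + 1, 3 * b + 2, 3 * b + 3} : Finset ℕ), x ∈ T := by
            intro x hx
            rw [← heq] at hx
            exact Finset.mem_of_mem_erase (Finset.mem_filter.1 hx).1
          have h1 := hall (3 * b + 1) (by simp)
          have h2 := hall (3 * b + 2) (by simp)
          have h3 := hall (3 * b + 3) (by simp)
          obtain ⟨u, _, hu⟩ := Finset.mem_image.1 h1
          obtain ⟨v, _, hv⟩ := Finset.mem_image.1 h2
          obtain ⟨w, _, hw⟩ := Finset.mem_image.1 h3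
          exact no_three_consecutive (v := v) (w := w) ⟨hpos, hf⟩ hu (by omega) (by omega)
      rw [Finset.card_range] at key
      exact key
    have hrange : (Finset.range (2 * n - 1)).card = 2 * n - 1 := Finset.card_range _
    omega
end

section
/- For all n ≥ 2, the radio number of K₂ □ K₂ □ K_n equals 6n − 1. -/
lemma habs (A B : ℕ) : |(A:ℤ) - B| = ((A - B : ℕ) : ℤ) + ((B - A : ℕ) : ℤ) := by
  rcases le_total A B with h | h
  · rw [abs_of_nonpos (by omega)]; omega
  · rw [abs_of_nonneg (by omega)]; omega

/-- An explicit optimal radio labeling of `K₂ □ K₂ □ Kₙ`. -/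
def lab (n : ℕ) (x : Fin 2 × Fin 2 × Fin n) : ℕ :=
  if x.1.val = 0 then
    (if x.2.1.val = 0 then 3 * x.2.2.val + 1
     else (if x.2.2.val = 0 then 6*n - 2 else 3*n + 3*x.2.2.val - 2))
  else
    (if x.2.1.val = 0 then (if x.2.2.val ≤ 1 then 6*n + 3*x.2.2.val - 4 else 3*n + 3*x.2.2.val - 4)
     else (if x.2.2.val = 0 then 3*n - 1 else 3*x.2.2.val - 1))

lemma lab_le (n : ℕ) (hn : 2 ≤ n) (v : Fin 2 × Fin 2 × Fin n) : lab n v ≤ 6*n - 1 := by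
  obtain ⟨⟨i,hi⟩,⟨j,hj⟩,⟨k,hk⟩⟩ := v
  unfold lab; dsimp only; split_ifs <;> omega

set_option maxHeartbeats 1000000 in
lemma lab_radio (n : ℕ) (hn : 2 ≤ n) : IsRadioLabeling (lab n) := by
  constructor
  · rintro ⟨⟨i,hi⟩,⟨j,hj⟩,⟨k,hk⟩⟩
    unfold lab; dsimp only; split_ifs <;> omega
  · rintro ⟨⟨i1,hi1⟩,⟨j1,hj1⟩,⟨k1,hk1⟩⟩ ⟨⟨i2,hi2⟩,⟨j2,hj2⟩,⟨k2,hk2⟩⟩ hne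
    rw [habs]
    rcases (show i1 = 0 ∨ i1 = 1 by omega) with rfl | rfl <;>
    rcases (show i2 = 0 ∨ i2 = 1 by omega) with rfl | rfl <;>
    rcases (show j1 = 0 ∨ j1 = 1 by omega) with rfl | rfl <;>
    rcases (show j2 = 0 ∨ j2 = 1 by omega) with rfl | rfl <;>
    · simp only [hdist, lab, Fin.mk.injEq, Prod.mk.injEq, ne_eq] at hne ⊢
      norm_num at hne ⊢ <;> split_ifs <;> omega

lemma hdist_le {a b c : ℕ} (u v : Fin a × Fin b × Fin c) : hdist u v ≤ 3 := by
  unfold hdist; split_ifs <;> omega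

lemma hkey {n : ℕ} (u v w : Fin 2 × Fin 2 × Fin n) :
    hdist u v ≤ 2 ∨ hdist v w ≤ 2 ∨ hdist u w ≤ 1 := by
  obtain ⟨u1,u2,u3⟩ := u; obtain ⟨v1,v2,v3⟩ := v; obtain ⟨w1,w2,w3⟩ := w
  simp only [hdist]
  fin_cases u1 <;> fin_cases v1 <;> fin_cases w1 <;>
    fin_cases u2 <;> fin_cases v2 <;> fin_cases w2 <;>
    simp <;> split_ifs <;> omega

lemma triple {n : ℕ} (f : Fin 2 × Fin 2 × Fin n → ℕ) (hf : IsRadioLabeling f)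
    (u v w : Fin 2 × Fin 2 × Fin n) (h1 : f u < f v) (h2 : f v < f w) :
    f u + 3 ≤ f w := by
  have huv : u ≠ v := fun h => by rw [h] at h1; omega
  have hvw : v ≠ w := fun h => by rw [h] at h2; omega
  have huw : u ≠ w := fun h => by rw [h] at h1; omega
  have r1 := hf.2 u v huv; rw [habs] at r1
  have r2 := hf.2 v w hvw; rw [habs] at r2
  have r3 := hf.2 u w huw; rw [habs] at r3
  rcases hkey u v w with h | h | h <;> omega

lemma lower {n : ℕ} (hn : 2 ≤ n) (f : Fin 2 × Fin 2 × Fin n → ℕ)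
    (hf : IsRadioLabeling f) (s : ℕ) (hs : ∀ v, f v ≤ s) : 6 * n - 1 ≤ s := by
  have finj : Function.Injective f := by
    intro u v h
    by_contra hne
    have h2 := hf.2 u v hne
    rw [h, habs] at h2
    have hd := hdist_le u v
    omega
  set T : Finset ℕ := Finset.image f Finset.univ with hT
  have hcard : T.card = 4 * n := by
    rw [hT, Finset.card_image_of_injective _ finj, Finset.card_univ]
    simp [Fintype.card_prod]; omega
  let e := T.orderIsoOfFin hcard
  have hpre : ∀ i : Fin (4*n), ∃ v, f v = (e i : ℕ) := by
    intro i
    have hm : ((e i : ℕ)) ∈ T := (e i).2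
    obtain ⟨v, _, hv⟩ := Finset.mem_image.mp hm
    exact ⟨v, hv⟩
  have hmono : ∀ i j : Fin (4*n), i < j → (e i : ℕ) < (e j : ℕ) := by
    intro i j h
    exact_mod_cast e.strictMono h
  have key : ∀ m : ℕ, ∀ hm : 2*m < 4*n, 3*m + 1 ≤ ((e ⟨2*m, hm⟩ : ℕ)) := by
    intro m
    induction m with
    | zero =>
      intro hm
      obtain ⟨v, hv⟩ := hpre ⟨2*0, hm⟩
      have := hf.1 v
      omega
    | succ m ih =>
      intro hm
      have h0 : 2*m < 4*n := by omega
      have h1 : 2*m+1 < 4*n := by omega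
      have h2 : 2*m+2 < 4*n := by omega
      have hix : (⟨2*(m+1), hm⟩ : Fin (4*n)) = ⟨2*m+2, h2⟩ := by
        apply Fin.ext; simp; omega
      rw [hix]
      obtain ⟨va, ha⟩ := hpre ⟨2*m, h0⟩
      obtain ⟨vb, hb⟩ := hpre ⟨2*m+1, h1⟩
      obtain ⟨vc, hc⟩ := hpre ⟨2*m+2, h2⟩
      have lt1 : f va < f vb := by
        rw [ha, hb]; exact hmono _ _ (Fin.mk_lt_mk.mpr (by omega))
      have lt2 : f vb < f vc := by
        rw [hb, hc]; exact hmono _ _ (Fin.mk_lt_mk.mpr (by omega))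
      have h3 := triple f hf va vb vc lt1 lt2
      have h4 := ih h0
      omega
  have h2 : 2*(2*n-1) < 4*n := by omega
  have hlast : 4*n - 1 < 4*n := by omega
  have hk := key (2*n-1) h2
  obtain ⟨vd, hd⟩ := hpre ⟨4*n-1, hlast⟩
  have hlt : ((e ⟨2*(2*n-1), h2⟩ : ℕ)) < ((e ⟨4*n-1, hlast⟩ : ℕ)) :=
    hmono _ _ (Fin.mk_lt_mk.mpr (by omega))
  have := hs vd
  omega

theorem radioNumber_22n (n : ℕ) (hn : 2 ≤ n) :
    radioNumber 2 2 n = 6 * n - 1 := by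
  have hmem : (6*n-1) ∈ {s : ℕ | ∃ f : Fin 2 × Fin 2 × Fin n → ℕ,
      IsRadioLabeling f ∧ ∀ v, f v ≤ s} :=
    ⟨lab n, lab_radio n hn, fun v => lab_le n hn v⟩
  apply le_antisymm
  · exact Nat.sInf_le hmem
  · obtain ⟨f, hf, hb⟩ := Nat.sInf_mem (⟨_, hmem⟩ : Set.Nonempty _)
    exact lower hn f hf _ hb
end
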